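/- The low-frequency attenuation per wavelength α_λ(Ω) associated with the dispersion relation 1/(z U_Euler)² = 1 + (Û² − 1)·iΩ/(1+iΩ), defined by α_λ = −2π Im(k)/Re(k) with k = z ω, attains its maximum over Ω ∈ (0,∞) at Ω_peak = 1/Û, with peak value α_λ^{peak} = 2π (Û − 1)/(Û + 1). -/

import Mathlib

/-!
If `w` lies off the closed negative real axis, its principal square root `s` satisfies
`Im s / Re s = tan (arg w / 2) = Im w / (‖w‖ + Re w)`. Since `1 / (U_E² W)` is a positive multiple
of `conj W`, this gives `α_λ = 2π tan (arg W / 2)`, and `W` is in turn a positive multiple of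
`N = (1 + iΩÛ²)(1 - iΩ)`. The bound `tan (arg N / 2) ≤ (Û - 1)/(Û + 1)` follows from
`‖N‖ ≥ Ω(Û² + 1)` (Cauchy–Schwarz) and `1 + Ω²Û² ≥ 2ΩÛ`, both sharp exactly at `Ω = 1/Û`.
-/

open Real Complex ComplexConjugate

/-- `tan (arg w / 2)`, in the algebraic form given by the half-angle formula. -/
noncomputable def tanHalfArg (w : ℂ) : ℝ := w.im / (‖w‖ + w.re)

lemma tanHalfArg_ofReal_mul {r : ℝ} (hr : 0 < r) (w : ℂ) :
    tanHalfArg (r * w) = tanHalfArg w := by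
  simp only [tanHalfArg, norm_mul, norm_real, Real.norm_of_nonneg hr.le, re_ofReal_mul,
    im_ofReal_mul, ← mul_add]
  exact mul_div_mul_left _ _ hr.ne'

lemma tanHalfArg_conj (w : ℂ) : tanHalfArg (conj w) = -tanHalfArg w := by
  simp [tanHalfArg, neg_div]

lemma tanHalfArg_inv (w : ℂ) : tanHalfArg w⁻¹ = -tanHalfArg w := by
  rcases eq_or_ne w 0 with rfl | hw
  · simp [tanHalfArg]
  rw [inv_def, mul_comm, tanHalfArg_ofReal_mul (inv_pos.2 (normSq_pos.2 hw)), tanHalfArg_conj]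

lemma im_div_re_eq_tanHalfArg_sq {s : ℂ} (hs : s.re ≠ 0) :
    s.im / s.re = tanHalfArg (s ^ 2) := by
  have hnorm : ‖s ^ 2‖ = s.re ^ 2 + s.im ^ 2 := by
    rw [norm_pow, Complex.sq_norm, normSq_apply]; ring
  rw [tanHalfArg, hnorm, sq, mul_re, mul_im]
  field_simp
  ring

lemma re_ne_zero_of_sq_mem_slitPlane {s : ℂ} (h : s ^ 2 ∈ slitPlane) : s.re ≠ 0 := by
  intro hre
  rw [mem_slitPlane_iff, sq, mul_re, mul_im, hre] at h
  rcases h with h | h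
  · nlinarith [sq_nonneg s.im]
  · simp at h

lemma im_div_re_cpow_half {w : ℂ} (hw : w ∈ slitPlane) :
    (w ^ (1 / 2 : ℂ)).im / (w ^ (1 / 2 : ℂ)).re = tanHalfArg w := by
  have hsq : (w ^ (1 / 2 : ℂ)) ^ 2 = w := by
    rw [one_div, cpow_ofNat_inv_pow]
  rw [im_div_re_eq_tanHalfArg_sq (re_ne_zero_of_sq_mem_slitPlane (by rwa [hsq])), hsq]

/-- `(1 + iΩÛ²)(1 − iΩ)`: the relaxation function `W(Ω)` with its denominator cleared. -/
def dispersionNumerator (U Ω : ℝ) : ℂ := ⟨1 + Ω ^ 2 * U ^ 2, Ω * (U ^ 2 - 1)⟩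

lemma relaxation_eq_ofReal_mul_dispersionNumerator (U Ω : ℝ) :
    1 + ((U : ℂ) ^ 2 - 1) * (I * Ω) / (1 + I * Ω) =
      ((1 + Ω ^ 2)⁻¹ : ℝ) * dispersionNumerator U Ω := by
  have hden : (1 + I * Ω) ≠ 0 := fun h => by simpa using congrArg re h
  have hnorm : (1 + (Ω : ℂ) ^ 2) ≠ 0 := by exact_mod_cast (by positivity : (1 + Ω ^ 2) ≠ 0)
  rw [one_add_div hden, div_eq_iff hden, dispersionNumerator, mk_eq_add_mul_I]
  push_cast
  field_simp
  linear_combination ((Ω : ℂ) ^ 2 - Ω ^ 2 * U ^ 2) * I_sq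

lemma norm_dispersionNumerator (U Ω : ℝ) :
    ‖dispersionNumerator U Ω‖ = √((1 + Ω ^ 2 * U ^ 2) ^ 2 + (Ω * (U ^ 2 - 1)) ^ 2) := by
  rw [norm_def, dispersionNumerator, normSq_mk]
  ring_nf

lemma im_div_re_sqrt_inv_relaxation {E : ℝ} (hE : E ≠ 0) (U Ω : ℝ) :
    let s := (1 / ((E : ℂ) ^ 2 * (1 + ((U : ℂ) ^ 2 - 1) * (I * Ω) / (1 + I * Ω)))) ^ (1 / 2 : ℂ)
    s.im / s.re = -tanHalfArg (dispersionNumerator U Ω) := by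
  have hc : 0 < E ^ 2 * (1 + Ω ^ 2)⁻¹ := by positivity
  have hre : 0 < (dispersionNumerator U Ω).re := by
    simp only [dispersionNumerator]; positivity
  dsimp only
  rw [relaxation_eq_ofReal_mul_dispersionNumerator, ← ofReal_pow, ← mul_assoc, ← ofReal_mul,
    one_div, im_div_re_cpow_half, tanHalfArg_inv, tanHalfArg_ofReal_mul hc]
  have hre' : 0 < ((E ^ 2 * (1 + Ω ^ 2)⁻¹ : ℝ) * dispersionNumerator U Ω).re := by
    rw [re_ofReal_mul]; positivity
  refine mem_slitPlane_iff.2 (Or.inl ?_)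
  rw [inv_re]
  exact div_pos hre' (normSq_pos.2 fun h => hre'.ne' (by rw [h, zero_re]))

lemma tanHalfArg_dispersionNumerator_le {U : ℝ} (hU : 1 ≤ U) (Ω : ℝ) :
    tanHalfArg (dispersionNumerator U Ω) ≤ (U - 1) / (U + 1) := by
  set N := dispersionNumerator U Ω
  -- `‖N‖² - Ω²(U² + 1)² = (1 - Ω²U²)²`
  have hnorm : Ω * (U ^ 2 + 1) ≤ ‖N‖ := by
    refine (le_abs_self _).trans (norm_dispersionNumerator U Ω ▸ Real.abs_le_sqrt ?_)
    nlinarith [sq_nonneg (1 - Ω ^ 2 * U ^ 2)]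
  have hre : N.re = 1 + Ω ^ 2 * U ^ 2 := rfl
  have him : N.im = Ω * (U ^ 2 - 1) := rfl
  have hden : Ω * (U + 1) ^ 2 ≤ ‖N‖ + N.re := by
    rw [hre]
    nlinarith [sq_nonneg (1 - Ω * U)]
  rw [tanHalfArg, div_le_div_iff₀ (by rw [hre]; positivity) (by linarith), him]
  nlinarith [mul_le_mul_of_nonneg_left hden (sub_nonneg.2 hU)]

lemma tanHalfArg_dispersionNumerator_one_div {U : ℝ} (hU : 0 < U) :
    tanHalfArg (dispersionNumerator U (1 / U)) = (U - 1) / (U + 1) := by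
  have hnorm : ‖dispersionNumerator U (1 / U)‖ = (U ^ 2 + 1) / U := by
    rw [norm_dispersionNumerator, ← Real.sqrt_sq (by positivity : 0 ≤ (U ^ 2 + 1) / U)]
    congr 1
    field_simp
    ring
  rw [tanHalfArg, hnorm]
  simp only [dispersionNumerator]
  field_simp
  ring

/-- the low-frequency attenuation per wavelength attains its
maximum at Ω_peak = 1/Û with peak value 2π(Û−1)/(Û+1). -/
theorem attenuation_peak
    (Uhat UEuler : ℝ) (hU : 1 < Uhat) (hUE : 0 < UEuler)
    (W : ℝ → ℂ)
    (hW : ∀ Ω : ℝ, W Ω = 1 + ((Uhat:ℂ) ^ 2 - 1) * (Complex.I * Ω) / (1 + Complex.I * Ω))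
    -- z = k/ω is the branch of the dispersion relation 1/(z U_Euler)² = W(Ω)
    -- with Re k > 0, Im k < 0 (principal square root of 1/(U_Euler² W)):
    (z : ℝ → ℂ)
    (hz : ∀ Ω : ℝ, z Ω = (1 / ((UEuler:ℂ) ^ 2 * W Ω)) ^ ((1:ℂ)/2))
    (alphaLambda : ℝ → ℝ)
    (halphaLambda : ∀ Ω : ℝ, alphaLambda Ω = -(2 * Real.pi) * (z Ω).im / (z Ω).re) :
    (∀ Ω ∈ Set.Ioi (0:ℝ), alphaLambda Ω ≤ alphaLambda (1 / Uhat)) ∧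
    alphaLambda (1 / Uhat) = 2 * Real.pi * (Uhat - 1) / (Uhat + 1) := by
  have hα : ∀ Ω, alphaLambda Ω = 2 * π * tanHalfArg (dispersionNumerator Uhat Ω) := fun Ω => by
    rw [halphaLambda, mul_div_assoc, hz, hW, im_div_re_sqrt_inv_relaxation hUE.ne']
    ring
  have hpeak : alphaLambda (1 / Uhat) = 2 * π * (Uhat - 1) / (Uhat + 1) := by
    rw [hα, tanHalfArg_dispersionNumerator_one_div (by linarith), mul_div_assoc]
  refine ⟨fun Ω _ => ?_, hpeak⟩
  rw [hpeak, hα, mul_div_assoc]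
  exact mul_le_mul_of_nonneg_left (tanHalfArg_dispersionNumerator_le hU.le Ω) (by positivity)
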